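/- Let ∅ ⊊ S_1 ⊊ S_2 ⊊ ⋯ ⊊ S_k ⊊ [d] be a chain of subsets of [d]. Then the following are equivalent: (a) there exists a permutation π of [d], with short G-sequence T_1, …, T_{c−1}, such that every partial union T_1 ∪ T_2 ∪ ⋯ ∪ T_j (for 1 ≤ j ≤ c−1) equals some S_i (i.e., the monomial x_{S_1} x_{S_2} ⋯ x_{S_k} lies in the coloring ideal K_G); (b) all of the difference sets S_1, S_2∖S_1, …, S_k∖S_{k−1}, [d]∖S_k are stable sets in G. Consequently, the chain is a face of the coloring complex Δ_G if and only if some difference set contains two adjacent vertices of G. -/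

import Mathlib

/-- `ellSpec G a k p` says that there are positions `i₁ < i₂ < ⋯ < i_p < i_{p+1} = k`
such that `a_{i_j}` and `a_{i_{j+1}}` are adjacent in `G` for all `j`. -/
def ellSpec {d : ℕ} (G : SimpleGraph (Fin d)) (a : Equiv.Perm (Fin d)) (k : Fin d)
    (p : ℕ) : Prop :=
  ∃ c : Fin (p + 1) → Fin d, StrictMono c ∧ c (Fin.last p) = k ∧
    ∀ j : Fin p, G.Adj (a (c j.castSucc)) (a (c j.succ))

/-- `ell G a k` is the largest `p` such that `ellSpec G a k p` holds: the length of the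
longest increasing path in `a` ending at position `k`. -/
noncomputable def ell {d : ℕ} (G : SimpleGraph (Fin d)) (a : Equiv.Perm (Fin d))
    (k : Fin d) : ℕ :=
  sSup {p | ellSpec G a k p}

/-- `j` is a cut of `a` (with respect to `G`): either `j` is the first position, or
comparing with the preceding position `i` we have `ℓ(i) < ℓ(j)`, or `ℓ(i) = ℓ(j)` and
`a_i < a_j`.  (Cuts are located at the first position of each block; this is the
0-indexed version of the paper's cuts `k ∈ [0, d-1]`.) -/
noncomputable def IsCut {d : ℕ} (G : SimpleGraph (Fin d)) (a : Equiv.Perm (Fin d))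
    (j : Fin d) : Prop :=
  (j : ℕ) = 0 ∨ ∃ i : Fin d, (i : ℕ) + 1 = (j : ℕ) ∧
    (ell G a i < ell G a j ∨ (ell G a i = ell G a j ∧ a i < a j))

/-- `c(π)`: the number of cuts of the permutation `a` with respect to `G`. -/
noncomputable def numCuts {d : ℕ} (G : SimpleGraph (Fin d))
    (a : Equiv.Perm (Fin d)) : ℕ :=
  Nat.card {j : Fin d // IsCut G a j}

/-- `χ_G(n)`: the number of proper colorings of `G` with color set `{1, …, n}`. -/
noncomputable def chromVal {d : ℕ} (G : SimpleGraph (Fin d)) (n : ℕ) : ℕ :=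
  Nat.card {φ : Fin d → Fin n // ∀ u v : Fin d, G.Adj u v → φ u ≠ φ v}

/-- The index of the block of the `G`-sequence of `a` containing position `k`:
the number of cuts at positions `≤ k`.  The `j`-th partial union `T_1 ∪ ⋯ ∪ T_j` of
the `G`-sequence of `a` is `{v | blockIdx G a (a.symm v) ≤ j}`. -/
noncomputable def blockIdx {d : ℕ} (G : SimpleGraph (Fin d)) (a : Equiv.Perm (Fin d))
    (k : Fin d) : ℕ :=
  Nat.card {j : Fin d // j ≤ k ∧ IsCut G a j}


/-!
For a chain from `S 0 = ∅` to `S (k + 1) = univ`, let `chainLevel S v` be the `i` with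
`v ∈ S (i + 1) \ S i`; condition (b) says that `chainLevel S` is a proper colouring of `G`.

`ℓ_π(q)` is the length of a longest `G`-path ending at `π q` along which `π⁻¹` increases. Inside a
block of the `G`-sequence `ℓ` never increases, but it strictly increases along an edge from an
earlier to a later position, so blocks are stable. If every partial union of blocks is some `S m`,
adjacent vertices lie in different blocks and hence have different levels.

Conversely, for a proper colouring `f`, sort the vertices by `f`, then by decreasing length of a
longest `f`-increasing `G`-path ending there, then by decreasing label. Since consecutive vertices
of a `G`-path have distinct colours, along such paths position increases iff `f` does, so `ℓ` is
that path length; the tie-breaks then leave no cut inside a colour class, and every partial union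
of blocks is a set `{v | f v < m}`, i.e. a member of the chain.
-/

section IncPath

variable {V α β : Type*} [LinearOrder α] [LinearOrder β] (G : SimpleGraph V)

def HasIncPath (f : V → α) (v : V) (m : ℕ) : Prop :=
  ∃ u : Fin (m + 1) → V, StrictMono (f ∘ u) ∧ u (Fin.last m) = v ∧
    ∀ j : Fin m, G.Adj (u j.castSucc) (u j.succ)

noncomputable def longestIncPath (f : V → α) (v : V) : ℕ :=
  sSup {m | HasIncPath G f v m}

variable {G} {f : V → α} {g : V → β}

lemma hasIncPath_zero (v : V) : HasIncPath G f v 0 :=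
  ⟨fun _ => v, Fin.strictMono_iff_lt_succ.2 fun j => j.elim0, rfl, fun j => j.elim0⟩

lemma HasIncPath.snoc {v w : V} {m : ℕ} (h : HasIncPath G f v m) (hvw : f v < f w)
    (hadj : G.Adj v w) : HasIncPath G f w (m + 1) := by
  obtain ⟨u, hu, rfl, hpath⟩ := h
  refine ⟨Fin.snoc u w, Fin.strictMono_iff_lt_succ.2 fun j => ?_, Fin.snoc_last _ _,
    fun j => ?_⟩
  · induction j using Fin.lastCases with
    | last => simpa [Fin.succ_last] using hvw
    | cast j =>
      simp only [Function.comp_apply, Fin.succ_castSucc, Fin.snoc_castSucc]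
      exact Fin.strictMono_iff_lt_succ.1 hu j
  · induction j using Fin.lastCases with
    | last => simpa [Fin.succ_last] using hadj
    | cast j =>
      simp only [Fin.succ_castSucc, Fin.snoc_castSucc]
      exact hpath j

lemma HasIncPath.of_lt_iff (hfg : ∀ x y, G.Adj x y → (f x < f y ↔ g x < g y)) {v : V} {m : ℕ}
    (h : HasIncPath G f v m) : HasIncPath G g v m := by
  obtain ⟨u, hu, hlast, hpath⟩ := h
  exact ⟨u, Fin.strictMono_iff_lt_succ.2 fun j =>
    (hfg _ _ (hpath j)).1 (Fin.strictMono_iff_lt_succ.1 hu j), hlast, hpath⟩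

lemma longestIncPath_congr (hfg : ∀ x y, G.Adj x y → (f x < f y ↔ g x < g y)) :
    longestIncPath G f = longestIncPath G g := by
  ext v
  have hiff (m : ℕ) : HasIncPath G f v m ↔ HasIncPath G g v m :=
    ⟨.of_lt_iff hfg, .of_lt_iff fun x y hxy => (hfg x y hxy).symm⟩
  simp only [longestIncPath, hiff]

variable [Fintype V]

lemma HasIncPath.lt_card {v : V} {m : ℕ} (h : HasIncPath G f v m) : m < Fintype.card V := by
  obtain ⟨u, hu, -, -⟩ := h
  simpa using Fintype.card_le_of_injective u hu.injective.of_comp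

lemma bddAbove_hasIncPath (v : V) : BddAbove {m | HasIncPath G f v m} :=
  ⟨Fintype.card V, fun _ h => h.lt_card.le⟩

lemma hasIncPath_longestIncPath (v : V) : HasIncPath G f v (longestIncPath G f v) :=
  Nat.sSup_mem ⟨0, hasIncPath_zero v⟩ (bddAbove_hasIncPath v)

lemma HasIncPath.le_longestIncPath {v : V} {m : ℕ} (h : HasIncPath G f v m) :
    m ≤ longestIncPath G f v :=
  le_csSup (bddAbove_hasIncPath v) h

lemma longestIncPath_lt_of_adj {v w : V} (hvw : f v < f w) (hadj : G.Adj v w) :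
    longestIncPath G f v < longestIncPath G f w :=
  ((hasIncPath_longestIncPath v).snoc hvw hadj).le_longestIncPath

end IncPath

section Ell

variable {d : ℕ} (G : SimpleGraph (Fin d)) (a : Equiv.Perm (Fin d))

lemma ellSpec_iff_hasIncPath (q : Fin d) (p : ℕ) :
    ellSpec G a q p ↔ HasIncPath G a.symm (a q) p := by
  constructor
  · rintro ⟨c, hc, hlast, hpath⟩
    exact ⟨a ∘ c, by simpa [Function.comp_def] using hc, by simp [hlast], hpath⟩
  · rintro ⟨u, hu, hlast, hpath⟩
    exact ⟨a.symm ∘ u, hu, by simp [hlast], by simpa using hpath⟩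

lemma ell_eq_longestIncPath (q : Fin d) : ell G a q = longestIncPath G a.symm (a q) := by
  simp only [ell, longestIncPath, ellSpec_iff_hasIncPath]

variable {G a}

lemma ell_lt_ell_of_adj {p q : Fin d} (hpq : p < q) (hadj : G.Adj (a p) (a q)) :
    ell G a p < ell G a q := by
  simp only [ell_eq_longestIncPath]
  exact longestIncPath_lt_of_adj (by simpa using hpq) hadj

lemma ell_le_of_not_isCut {i q : Fin d} (hiq : (i : ℕ) + 1 = q) (hq : ¬ IsCut G a q) :
    ell G a q ≤ ell G a i := by
  by_contra! h
  exact hq (Or.inr ⟨i, hiq, Or.inl h⟩)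

lemma ell_le_of_forall_not_isCut {p q : Fin d} (hpq : p ≤ q)
    (hcut : ∀ r, p < r → r ≤ q → ¬ IsCut G a r) : ell G a q ≤ ell G a p := by
  obtain ⟨n, hn⟩ := Nat.exists_eq_add_of_le (Fin.le_def.1 hpq)
  induction n generalizing q with
  | zero => rw [Fin.ext hn]
  | succ n ih =>
    let i : Fin d := ⟨p + n, by omega⟩
    have hiq : i ≤ q := Fin.le_def.2 (by simp [i]; omega)
    calc ell G a q ≤ ell G a i :=
          ell_le_of_not_isCut (by simp [i]; omega) (hcut q (Fin.lt_def.2 (by omega)) le_rfl)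
      _ ≤ ell G a p :=
          ih (Fin.le_def.2 (by simp [i])) (fun r hpr hri => hcut r hpr (hri.trans hiq)) rfl

end Ell

section Blocks

variable {d : ℕ} {G : SimpleGraph (Fin d)} {a : Equiv.Perm (Fin d)}

lemma blockIdx_eq_ncard (q : Fin d) :
    blockIdx G a q = {r | r ≤ q ∧ IsCut G a r}.ncard :=
  (Nat.card_coe_set_eq _).symm

lemma blockIdx_mono : Monotone (blockIdx G a) := fun p q hpq => by
  simp only [blockIdx_eq_ncard]
  exact Set.ncard_le_ncard fun r hr => ⟨hr.1.trans hpq, hr.2⟩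

lemma blockIdx_lt_of_isCut {p q : Fin d} (hpq : p < q) (hq : IsCut G a q) :
    blockIdx G a p < blockIdx G a q := by
  simp only [blockIdx_eq_ncard]
  refine Set.ncard_lt_ncard ((Set.ssubset_iff_of_subset fun r hr => ?_).2 ⟨q, ?_, ?_⟩)
  · exact ⟨hr.1.trans hpq.le, hr.2⟩
  · exact ⟨le_rfl, hq⟩
  · exact fun h => h.1.not_gt hpq

lemma exists_isCut_of_blockIdx_lt {p r : Fin d} (h : blockIdx G a p < blockIdx G a r) :
    ∃ q, p < q ∧ q ≤ r ∧ IsCut G a q := by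
  by_contra! hno
  refine h.not_ge ?_
  simp only [blockIdx_eq_ncard]
  exact Set.ncard_le_ncard fun q hq => ⟨not_lt.1 fun hpq => hno q hpq hq.1 hq.2, hq.2⟩

lemma one_le_blockIdx (q : Fin d) : 1 ≤ blockIdx G a q :=
  have : Nonempty {r // r ≤ q ∧ IsCut G a r} :=
    ⟨⟨⟨0, q.pos⟩, Fin.le_def.2 (Nat.zero_le _), Or.inl rfl⟩⟩
  Nat.card_pos

lemma blockIdx_le_one_of_forall_le {p : Fin d} (hp : ∀ q, p ≤ q) : blockIdx G a p ≤ 1 := by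
  rw [blockIdx_eq_ncard, ← Set.ncard_singleton p]
  exact Set.ncard_le_ncard fun r hr => le_antisymm hr.1 (hp r)

lemma blockIdx_le_numCuts (q : Fin d) : blockIdx G a q ≤ numCuts G a :=
  Nat.card_le_card_of_injective (fun r => ⟨r.1, r.2.2⟩) fun _ _ h => Subtype.ext (by simpa using h)

lemma blockIdx_of_forall_le {r : Fin d} (hr : ∀ q, q ≤ r) : blockIdx G a r = numCuts G a :=
  Nat.card_congr (Equiv.subtypeEquivRight fun q => and_iff_right (hr q))

lemma not_adj_of_blockIdx_eq {p q : Fin d} (h : blockIdx G a p = blockIdx G a q) :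
    ¬ G.Adj (a p) (a q) := by
  wlog hpq : p < q generalizing p q
  · rcases (not_lt.1 hpq).lt_or_eq with hqp | rfl
    · exact fun hadj => this h.symm hqp hadj.symm
    · exact G.irrefl
  intro hadj
  have hcut : ∀ r, p < r → r ≤ q → ¬ IsCut G a r := fun r hpr hrq hr =>
    (blockIdx_lt_of_isCut hpr hr).not_ge (h ▸ blockIdx_mono hrq)
  exact (ell_lt_ell_of_adj hpq hadj).not_ge (ell_le_of_forall_not_isCut hpq.le hcut)

end Blocks

section SortPerm

variable {d : ℕ} {α : Type*} [LinearOrder α] (G : SimpleGraph (Fin d)) (f : Fin d → α)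

/-- The two tie-breaks are exactly the negations of the two ways `IsCut` can hold. -/
noncomputable def sortKey (v : Fin d) : α ×ₗ ℕᵒᵈ ×ₗ (Fin d)ᵒᵈ :=
  toLex (f v, toLex (OrderDual.toDual (longestIncPath G f v), OrderDual.toDual v))

noncomputable def sortPerm : Equiv.Perm (Fin d) :=
  Tuple.sort (sortKey G f)

lemma sortKey_injective : Function.Injective (sortKey G f) := fun u v h => by
  simpa [sortKey] using congrArg (fun x => (ofLex (ofLex x).2).2) h

lemma strictMono_sortKey_sortPerm : StrictMono (sortKey G f ∘ sortPerm G f) :=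
  (Tuple.monotone_sort _).strictMono_of_injective
    ((sortKey_injective G f).comp (Equiv.injective _))

lemma monotone_sortPerm : Monotone (f ∘ sortPerm G f) := fun _ _ h =>
  Prod.Lex.monotone_fst _ _ (Tuple.monotone_sort (sortKey G f) h)

variable {G f} (hf : ∀ u v, G.Adj u v → f u ≠ f v)
include hf

lemma lt_iff_symm_sortPerm_lt {u v : Fin d} (hadj : G.Adj u v) :
    f u < f v ↔ (sortPerm G f).symm u < (sortPerm G f).symm v := by
  have hmono := monotone_sortPerm G f
  constructor
  · intro h
    by_contra! h'
    exact (not_lt.2 (by simpa using hmono h')) h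
  · intro h
    exact lt_of_le_of_ne (by simpa using hmono h.le) (hf u v hadj)

lemma ell_sortPerm (q : Fin d) :
    ell G (sortPerm G f) q = longestIncPath G f (sortPerm G f q) := by
  rw [ell_eq_longestIncPath,
    longestIncPath_congr fun x y hxy => (lt_iff_symm_sortPerm_lt hf hxy).symm]

lemma lt_of_isCut_sortPerm {i q : Fin d} (hiq : (i : ℕ) + 1 = q)
    (hq : IsCut G (sortPerm G f) q) : f (sortPerm G f i) < f (sortPerm G f q) := by
  have hkey := strictMono_sortKey_sortPerm G f (Fin.lt_def.2 (by omega) : i < q)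
  simp only [Function.comp_apply, sortKey, Prod.Lex.toLex_lt_toLex] at hkey
  rcases hq with hq | ⟨i', hi', hcut⟩
  · omega
  obtain rfl : i' = i := Fin.ext (by omega)
  simp only [ell_sortPerm hf] at hcut
  rcases hkey with hlt | ⟨-, hlt | ⟨heq, hlt⟩⟩
  · exact hlt
  all_goals
    simp only [OrderDual.toDual_lt_toDual, OrderDual.toDual_inj] at *
    omega

end SortPerm

lemma exists_perm_lt_of_blockIdx_lt {d : ℕ} {α : Type*} [LinearOrder α] {G : SimpleGraph (Fin d)}
    {f : Fin d → α} (hf : ∀ u v, G.Adj u v → f u ≠ f v) :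
    ∃ a : Equiv.Perm (Fin d), ∀ p r, blockIdx G a p < blockIdx G a r → f (a p) < f (a r) := by
  refine ⟨sortPerm G f, fun p r h => ?_⟩
  obtain ⟨q, hpq, hqr, hq⟩ := exists_isCut_of_blockIdx_lt h
  have hq0 : (q : ℕ) ≠ 0 := by have := Fin.lt_def.1 hpq; omega
  let i : Fin d := ⟨q - 1, by omega⟩
  have hiq : (i : ℕ) + 1 = q := by simp [i]; omega
  calc f (sortPerm G f p) ≤ f (sortPerm G f i) :=
        monotone_sortPerm G f (Fin.le_def.2 (by have := Fin.lt_def.1 hpq; omega))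
    _ < f (sortPerm G f q) := lt_of_isCut_sortPerm hf hiq hq
    _ ≤ f (sortPerm G f r) := monotone_sortPerm G f hqr

section Chain

variable {V : Type*} (S : ℕ → Set V) {k : ℕ}

noncomputable def chainLevel (v : V) : ℕ :=
  sInf {i | v ∈ S (i + 1)}

variable {S} (hS0 : S 0 = ∅) (hSl : S (k + 1) = Set.univ) (hS : ∀ i ≤ k, S i ⊆ S (i + 1))

include hSl in
lemma chainLevel_le (v : V) : chainLevel S v ≤ k :=
  Nat.sInf_le (by simp [hSl])

include hSl in
lemma mem_chainLevel_add_one (v : V) : v ∈ S (chainLevel S v + 1) :=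
  Nat.sInf_mem (s := {i | v ∈ S (i + 1)}) ⟨k, by simp [hSl]⟩

include hS0 hSl hS in
lemma mem_iff_chainLevel_lt {m : ℕ} (hm : m ≤ k + 1) (v : V) :
    v ∈ S m ↔ chainLevel S v < m := by
  constructor
  · intro hv
    cases m with
    | zero => simp [hS0] at hv
    | succ m => exact Nat.lt_succ_of_le (Nat.sInf_le hv)
  · intro hv
    have hmono : MonotoneOn S (Set.Iic (k + 1)) :=
      monotoneOn_of_le_add_one Set.ordConnected_Iic fun i _ _ hi =>
        hS i (Nat.le_of_succ_le_succ hi)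
    have hlev := chainLevel_le hSl v
    exact hmono (Set.mem_Iic.2 (by omega)) hm hv (mem_chainLevel_add_one hSl v)

include hS0 hSl hS in
lemma stable_diff_iff_chainLevel_ne (G : SimpleGraph V) :
    (∀ i, i ≤ k → ∀ u ∈ S (i + 1) \ S i, ∀ v ∈ S (i + 1) \ S i, ¬ G.Adj u v) ↔
      ∀ u v, G.Adj u v → chainLevel S u ≠ chainLevel S v := by
  have hdiff {i : ℕ} (hi : i ≤ k) (v : V) : v ∈ S (i + 1) \ S i ↔ chainLevel S v = i := by
    rw [Set.mem_sdiff, mem_iff_chainLevel_lt hS0 hSl hS (by omega),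
      mem_iff_chainLevel_lt hS0 hSl hS (by omega)]
    omega
  constructor
  · intro h u v hadj heq
    have hu := chainLevel_le hSl u
    exact h _ hu u ((hdiff hu u).2 rfl) v ((hdiff hu v).2 heq.symm) hadj
  · intro h i hi u hu v hv hadj
    exact h u v hadj (((hdiff hi u).1 hu).trans ((hdiff hi v).1 hv).symm)

include hS0 hSl hS in
lemma exists_eq_of_chainLevel_lt {U : Set V} {u w : V} (hu : u ∈ U) (hw : w ∉ U)
    (hsep : ∀ x ∈ U, ∀ y ∉ U, chainLevel S x < chainLevel S y) :
    ∃ m, 1 ≤ m ∧ m ≤ k ∧ S m = U := by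
  set m := sInf (chainLevel S '' Uᶜ)
  obtain ⟨y, hy, hym⟩ : m ∈ chainLevel S '' Uᶜ := Nat.sInf_mem ⟨_, w, hw, rfl⟩
  have hmk : m ≤ k := hym ▸ chainLevel_le hSl y
  have hU : ∀ x, x ∈ U ↔ chainLevel S x < m := fun x => by
    refine ⟨fun hx => hym ▸ hsep x hx y hy, fun hx => ?_⟩
    by_contra hxU
    exact hx.not_ge (Nat.sInf_le ⟨x, hxU, rfl⟩)
  refine ⟨m, (Nat.zero_le _).trans_lt ((hU u).1 hu), hmk, ?_⟩
  ext x
  rw [mem_iff_chainLevel_lt hS0 hSl hS (by omega), hU]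

end Chain

section PartialUnions

variable {d k : ℕ} {G : SimpleGraph (Fin d)} {S : ℕ → Set (Fin d)}
  (hS0 : S 0 = ∅) (hSl : S (k + 1) = Set.univ) (hS : ∀ i ≤ k, S i ⊆ S (i + 1))
include hS0 hSl hS

lemma chainLevel_ne_of_adj {a : Equiv.Perm (Fin d)}
    (ha : ∀ j : ℕ, 1 ≤ j → j + 1 ≤ numCuts G a →
      ∃ i, 1 ≤ i ∧ i ≤ k ∧ S i = {v : Fin d | blockIdx G a (a.symm v) ≤ j})
    {u v : Fin d} (hadj : G.Adj u v) : chainLevel S u ≠ chainLevel S v := by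
  wlog h : blockIdx G a (a.symm u) < blockIdx G a (a.symm v) generalizing u v
  · have hne : blockIdx G a (a.symm u) ≠ blockIdx G a (a.symm v) := fun heq =>
      not_adj_of_blockIdx_eq heq (by simpa using hadj)
    exact (this hadj.symm (lt_of_le_of_ne (not_lt.1 h) hne.symm)).symm
  obtain ⟨m, -, hmk, hSm⟩ :=
    ha _ (one_le_blockIdx _) (h.trans_le (blockIdx_le_numCuts _))
  have hu : u ∈ S m := by simp [hSm]
  have hv : v ∉ S m := by simpa [hSm] using h
  rw [mem_iff_chainLevel_lt hS0 hSl hS (by omega)] at hu hv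
  omega

lemma exists_perm_partialUnions_eq (hf : ∀ u v, G.Adj u v → chainLevel S u ≠ chainLevel S v) :
    ∃ a : Equiv.Perm (Fin d), ∀ j : ℕ, 1 ≤ j → j + 1 ≤ numCuts G a →
      ∃ i, 1 ≤ i ∧ i ≤ k ∧ S i = {v : Fin d | blockIdx G a (a.symm v) ≤ j} := by
  obtain ⟨a, ha⟩ := exists_perm_lt_of_blockIdx_lt hf
  refine ⟨a, fun j hj hjc => ?_⟩
  obtain ⟨⟨⟨_, hd⟩, -⟩⟩ : Nonempty {q // IsCut G a q} :=
    (Nat.card_pos_iff.1 (show 0 < numCuts G a by omega)).1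
  let first : Fin d := ⟨0, by omega⟩
  let last : Fin d := ⟨d - 1, by omega⟩
  have hfirst : blockIdx G a first ≤ 1 :=
    blockIdx_le_one_of_forall_le fun q => Fin.le_def.2 (Nat.zero_le _)
  have hlast : blockIdx G a last = numCuts G a :=
    blockIdx_of_forall_le fun q => Fin.le_def.2 (Nat.le_sub_one_of_lt q.isLt)
  refine exists_eq_of_chainLevel_lt hS0 hSl hS (u := a first) (w := a last)
    ?_ ?_ fun x hx y hy => by simpa using ha _ _ (lt_of_le_of_lt hx (not_le.1 hy))
  · simp only [Set.mem_ofPred_eq, Equiv.symm_apply_apply]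
    omega
  · simp only [Set.mem_ofPred_eq, Equiv.symm_apply_apply]
    omega

lemma exists_perm_partialUnions_iff :
    (∃ a : Equiv.Perm (Fin d), ∀ j : ℕ, 1 ≤ j → j + 1 ≤ numCuts G a →
      ∃ i, 1 ≤ i ∧ i ≤ k ∧ S i = {v : Fin d | blockIdx G a (a.symm v) ≤ j}) ↔
      ∀ u v, G.Adj u v → chainLevel S u ≠ chainLevel S v :=
  ⟨fun ⟨_, ha⟩ _ _ => chainLevel_ne_of_adj hS0 hSl hS ha, exists_perm_partialUnions_eq hS0 hSl hS⟩

end PartialUnions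

theorem coloring_ideal_membership_iff_stable_differences_general {d k : ℕ}
    (G : SimpleGraph (Fin d)) (S : ℕ → Set (Fin d))
    (hS0 : S 0 = ∅) (hSl : S (k + 1) = Set.univ)
    (hchain : ∀ i, i ≤ k → S i ⊂ S (i + 1)) :
    ((∃ a : Equiv.Perm (Fin d), ∀ j : ℕ, 1 ≤ j → j + 1 ≤ numCuts G a →
        ∃ i, 1 ≤ i ∧ i ≤ k ∧ S i = {v : Fin d | blockIdx G a (a.symm v) ≤ j}) ↔
      (∀ i, i ≤ k → ∀ u ∈ S (i + 1) \ S i, ∀ v ∈ S (i + 1) \ S i, ¬ G.Adj u v)) ∧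
    (¬ (∃ a : Equiv.Perm (Fin d), ∀ j : ℕ, 1 ≤ j → j + 1 ≤ numCuts G a →
        ∃ i, 1 ≤ i ∧ i ≤ k ∧ S i = {v : Fin d | blockIdx G a (a.symm v) ≤ j}) ↔
      (∃ i ≤ k, ∃ u v, G.Adj u v ∧ u ∈ S (i + 1) \ S i ∧ v ∈ S (i + 1) \ S i)) := by
  have hS : ∀ i ≤ k, S i ⊆ S (i + 1) := fun i hi => (hchain i hi).subset
  have hmain := (exists_perm_partialUnions_iff hS0 hSl hS).trans
    (stable_diff_iff_chainLevel_ne hS0 hSl hS G).symm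
  refine ⟨hmain, hmain.not.trans ?_⟩
  push Not
  constructor
  · rintro ⟨i, hi, u, hu, v, hv, hadj⟩
    exact ⟨i, hi, u, v, hadj, hu, hv⟩
  · rintro ⟨i, hi, u, v, hadj, hu, hv⟩
    exact ⟨i, hi, u, hu, v, hv, hadj⟩

/-- Let `∅ ⊊ S 1 ⊊ ⋯ ⊊ S k ⊊ [d]` be a chain (encoded by
`S : ℕ → Set (Fin d)` with `S 0 = ∅` and `S (k+1) = univ`).  Then the following are
equivalent: (a) there is a permutation `a` all of whose short-`G`-sequence partial
unions `T_1 ∪ ⋯ ∪ T_j` (for `1 ≤ j ≤ c(a) − 1`) occur among the `S i`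
(i.e. `x_{S 1} ⋯ x_{S k}` lies in the coloring ideal `K_G`); (b) all the difference
sets `S 1, S 2 ∖ S 1, …, [d] ∖ S k` are stable in `G`.  Consequently the chain is a
face of the coloring complex `Δ_G` iff some difference set contains two adjacent
vertices. -/
theorem coloring_ideal_membership_iff_stable_differences {d k : ℕ} (hd : 1 ≤ d)
    (hk : 1 ≤ k) (G : SimpleGraph (Fin d)) (S : ℕ → Set (Fin d))
    (hS0 : S 0 = ∅) (hSl : S (k + 1) = Set.univ)
    (hchain : ∀ i, i ≤ k → S i ⊂ S (i + 1)) :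
    ((∃ a : Equiv.Perm (Fin d), ∀ j : ℕ, 1 ≤ j → j + 1 ≤ numCuts G a →
        ∃ i, 1 ≤ i ∧ i ≤ k ∧ S i = {v : Fin d | blockIdx G a (a.symm v) ≤ j}) ↔
      (∀ i, i ≤ k → ∀ u ∈ S (i + 1) \ S i, ∀ v ∈ S (i + 1) \ S i, ¬ G.Adj u v)) ∧
    (¬ (∃ a : Equiv.Perm (Fin d), ∀ j : ℕ, 1 ≤ j → j + 1 ≤ numCuts G a →
        ∃ i, 1 ≤ i ∧ i ≤ k ∧ S i = {v : Fin d | blockIdx G a (a.symm v) ≤ j}) ↔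
      (∃ i ≤ k, ∃ u v, G.Adj u v ∧ u ∈ S (i + 1) \ S i ∧ v ∈ S (i + 1) \ S i)) :=
  coloring_ideal_membership_iff_stable_differences_general G S hS0 hSl hchain
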